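/- For the substitution σ: 1 ↦ 32131, 2 ↦ 321, 3 ↦ 3213, no power σⁿ (n ≥ 1) equals a finite product of Arnoux-Rauzy substitutions in which each of σ₁, σ₂, σ₃ appears: indeed, the fixed point of σ (starting from 3) has at least 14 distinct factors of length 6, whereas any Arnoux-Rauzy sequence has exactly 13 factors of length 6 (complexity 2n+1). -/
import Mathlib


/-- Application of a substitution (given by the images of the letters) to a word. -/
def applySubst (τ : Fin 3 → List (Fin 3)) (w : List (Fin 3)) : List (Fin 3) :=
  w.flatMap τ

/-- The substitution σ : 1 ↦ 32131, 2 ↦ 321, 3 ↦ 3213 (letters 1,2,3 encoded 0,1,2). -/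
def sigma : Fin 3 → List (Fin 3)
  | 0 => [2, 1, 0, 2, 0]
  | 1 => [2, 1, 0]
  | 2 => [2, 1, 0, 2]

/-- The Arnoux-Rauzy substitutions σ₁, σ₂, σ₃: σᵢ(i) = i, σᵢ(j) = ji for j ≠ i. -/
def AR (i : Fin 3) : Fin 3 → List (Fin 3) := fun j => if j = i then [i] else [j, i]

/-- Application of a finite product σ_{i₁} ⋯ σ_{iₙ} of Arnoux-Rauzy substitutions. -/
def applyARProd (is : List (Fin 3)) (w : List (Fin 3)) : List (Fin 3) :=
  is.foldr (fun i acc => applySubst (AR i) acc) w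

/-- The list of distinct factors of length 6 of a word. -/
def factors6 (L : List (Fin 3)) : List (List (Fin 3)) :=
  (((List.range L.length).map fun k => (L.drop k).take 6).filter
    fun u => u.length = 6).dedup


lemma sigma_ne_nil (x : Fin 3) : sigma x ≠ [] := by fin_cases x <;> simp [sigma]

lemma applySubst_sigma_ne_nil {w : List (Fin 3)} (h : w ≠ []) :
    applySubst sigma w ≠ [] := by
  cases w with
  | nil => exact absurd rfl h
  | cons x xs =>
      simp only [applySubst, List.flatMap_cons]
      intro hc
      exact sigma_ne_nil x (List.append_eq_nil_iff.mp hc).1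

lemma iter_ne_nil (n : ℕ) : (applySubst sigma)^[n] [(0 : Fin 3)] ≠ [] := by
  induction n with
  | zero => simp
  | succ m ih =>
      rw [Function.iterate_succ_apply']
      exact applySubst_sigma_ne_nil ih

lemma applySubst_sigma_head {w : List (Fin 3)} (h : w ≠ []) :
    (applySubst sigma w).head? = some 2 := by
  cases w with
  | nil => exact absurd rfl h
  | cons x xs =>
      simp only [applySubst, List.flatMap_cons]
      rw [List.head?_append_of_ne_nil _ (sigma_ne_nil x)]
      fin_cases x <;> rfl

lemma AR_head (i : Fin 3) {w : List (Fin 3)} (h : w ≠ []) :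
    (applySubst (AR i) w).head? = w.head? := by
  cases w with
  | nil => exact absurd rfl h
  | cons x xs =>
      simp only [applySubst, List.flatMap_cons, AR]
      by_cases hx : x = i <;> simp [hx]

lemma applyARProd_head (is : List (Fin 3)) (a : Fin 3) :
    (applyARProd is [a]).head? = some a ∧ applyARProd is [a] ≠ [] := by
  induction is with
  | nil => simp [applyARProd]
  | cons i is ih =>
      have h1 : applyARProd (i :: is) [a] = applySubst (AR i) (applyARProd is [a]) := rfl
      constructor
      · rw [h1, AR_head i ih.2, ih.1]
      · rw [h1]
        intro hc
        have := AR_head i ih.2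
        rw [hc] at this
        simp [ih.1] at this

/-- The word σ³(3) (a prefix of the fixed point of σ starting from 3) has at least
14 distinct factors of length 6 — more than the 13 = 2·6+1 of any Arnoux-Rauzy
sequence — and consequently no power of σ equals a finite product of Arnoux-Rauzy
substitutions in which each of σ₁, σ₂, σ₃ appears. -/
theorem sigma_power_not_AR_product :
    14 ≤ (factors6 ((applySubst sigma)^[3] [2])).length ∧
    ∀ n : ℕ, 1 ≤ n → ∀ is : List (Fin 3), (∀ i : Fin 3, i ∈ is) →
      ∃ a : Fin 3, (applySubst sigma)^[n] [a] ≠ applyARProd is [a] := by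
  constructor
  · decide
  · intro n hn is _
    refine ⟨0, fun hEq => ?_⟩
    have h1 : ((applySubst sigma)^[n] [(0 : Fin 3)]).head? = some 2 := by
      obtain ⟨m, rfl⟩ := Nat.exists_eq_add_of_le hn
      rw [Nat.add_comm, Function.iterate_succ_apply']
      exact applySubst_sigma_head (iter_ne_nil m)
    rw [hEq, (applyARProd_head is 0).1] at h1
    exact absurd h1 (by decide)
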